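/- arXiv:math/0501523 — 3 statements merged into one kernel-verified Lean document; each statement's English description precedes it below -/
import Mathlib

section
/- For any function $\phi$ on the Bockstein basis satisfying the Bockstein inequalities BI1–BI6, there exists a field coefficient group $F \in \{\mathbb{Q}\} \cup \{\mathbb{Z}_p : p \text{ prime}\}$ such that for every prime $p$, $\phi(\mathbb{Z}_{(p)}) \leq \phi(F) + 1$. (In the paper this yields: for every compactum $X$ there is a field $F \in \sigma$ with $\dim_{\mathbb{Z}} X \leq \dim_F X + 1$, using $\dim_{\mathbb{Z}} X = \sup_p \dim_{\mathbb{Z}_{(p)}} X$.) -/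
/-- The Bockstein basis `σ`: the rationals `ℚ`, and for each prime `p` the groups
`ℤ/p`, the Prüfer group `ℤ_{p^∞}`, and the localization `ℤ_{(p)}`. -/
inductive BocksteinBasis : Type
  | rat : BocksteinBasis
  | zmod : Nat.Primes → BocksteinBasis
  | prufer : Nat.Primes → BocksteinBasis
  | localized : Nat.Primes → BocksteinBasis

/-- The Bockstein inequalities BI1–BI6. -/
def SatisfiesBI (φ : BocksteinBasis → ℕ) : Prop :=
  ∀ p : Nat.Primes,
    φ (.prufer p) ≤ φ (.zmod p) ∧
    φ (.zmod p) ≤ φ (.prufer p) + 1 ∧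
    φ (.zmod p) ≤ φ (.localized p) ∧
    φ .rat ≤ φ (.localized p) ∧
    φ (.localized p) ≤ max (φ .rat) (φ (.prufer p) + 1) ∧
    φ (.prufer p) ≤ max (φ .rat) (φ (.localized p) - 1)

/-- For any function `φ` on the Bockstein basis satisfying BI1–BI6
(such that `sup_p φ(ℤ_{(p)})` is attained at some prime), there is a field coefficient
group `F ∈ {ℚ} ∪ {ℤ_p : p prime}` with `φ(ℤ_{(p)}) ≤ φ(F) + 1` for every prime `p`.
(For a compactum this gives a field `F ∈ σ` with `dim_ℤ X ≤ dim_F X + 1`, using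
`dim_ℤ X = sup_p dim_{ℤ_{(p)}} X`.) -/
theorem exists_field_bound (φ : BocksteinBasis → ℕ) (hφ : SatisfiesBI φ)
    (hattain : ∃ p₀ : Nat.Primes, ∀ p : Nat.Primes,
      φ (.localized p) ≤ φ (.localized p₀)) :
    ∃ F : BocksteinBasis, (F = .rat ∨ ∃ q : Nat.Primes, F = .zmod q) ∧
      ∀ p : Nat.Primes, φ (.localized p) ≤ φ F + 1 := by
  obtain ⟨p₀, hp₀⟩ := hattain
  by_cases h : φ (.localized p₀) ≤ φ .rat + 1
  · exact ⟨.rat, Or.inl rfl, fun p => (hp₀ p).trans h⟩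
  · refine ⟨.zmod p₀, Or.inr ⟨p₀, rfl⟩, fun p => (hp₀ p).trans ?_⟩
    obtain ⟨h1, _, _, _, h5, _⟩ := hφ p₀
    have := le_max_iff.mp h5
    omega
end

section
/- The conjugate $\bar{F} = (\mathcal{S}, \mathcal{S} \setminus \mathcal{D}; -d)$ of a cd-type $F = (\mathcal{S}, \mathcal{D}; d)$ is the maximal element, with respect to the partial order induced by pointwise comparison of the associated Bockstein functions, of the set $\{F' : \|F [+] F'\| \leq 0\}$. -/
open scoped Classical

/-- The Bockstein function `φ_F` associated to a generalized (`ℤ`-valued) cd-type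
`F = (𝒮, 𝒟; d)`: `φ_F(ℤ_p) = d(p)`, `φ_F(ℚ) = d(0)`, `φ_F(ℤ_{p^∞}) = d(p) - χ_𝒟(p)`,
`φ_F(ℤ_{(p)}) = max {d(0), d(p) - χ_𝒟(p) + 1}` for `p ∈ 𝒮` and `d(0)` for `p ∉ 𝒮`. -/
noncomputable def phiOfTriple (S D : Set Nat.Primes) (d : Option Nat.Primes → ℤ) :
    BocksteinBasis → ℤ
  | .rat => d none
  | .zmod p => d (some p)
  | .prufer p => d (some p) - (if p ∈ D then 1 else 0)
  | .localized p =>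
      if p ∈ S then max (d none) (d (some p) - (if p ∈ D then 1 else 0) + 1) else d none

/-- The norm `‖F‖ = sup_{x ∈ 𝒫 ∪ {0}} (d(x) + χ_{𝒮∖𝒟}(x))` of a generalized cd-type,
valued in `EReal` (`none` plays the role of `0`, `χ_{𝒮∖𝒟}(0) = 0`). -/
noncomputable def cdNormE (S D : Set Nat.Primes) (d : Option Nat.Primes → ℤ) : EReal :=
  ⨆ x : Option Nat.Primes,
    (((d x + (match x with
      | none => (0 : ℤ)
      | some p => if p ∈ S \ D then 1 else 0) : ℤ) : ℝ) : EReal)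

/-- The conjugate `F̄ = (𝒮, 𝒮 ∖ 𝒟; -d)` of a cd-type `F = (𝒮, 𝒟; d)`
is the maximal element of `{F' : ‖F [+] F'‖ ≤ 0}` with respect to the partial order given
by pointwise comparison of the associated Bockstein functions; here
`F₁ [+] F₂ = (𝒮₁ ∪ 𝒮₂, 𝒟₁ ∪ 𝒟₂; d₁ + d₂)`. -/
theorem conj_isGreatest
    (S D : Set Nat.Primes) (d : Option Nat.Primes → ℤ)
    (hDS : D ⊆ S)
    (hc : ∀ p : Nat.Primes, p ∉ S → d (some p) = d none) :
    -- `F̄` belongs to the set: `‖F [+] F̄‖ ≤ 0`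
    cdNormE (S ∪ S) (D ∪ (S \ D)) (fun x => d x + - d x) ≤ 0 ∧
    -- and it dominates every member of the set
    (∀ (S' D' : Set Nat.Primes) (d' : Option Nat.Primes → ℤ), D' ⊆ S' →
      (∀ p : Nat.Primes, p ∉ S' → d' (some p) = d' none) →
      cdNormE (S ∪ S') (D ∪ D') (fun x => d x + d' x) ≤ 0 →
      ∀ G : BocksteinBasis,
        phiOfTriple S' D' d' G ≤ phiOfTriple S (S \ D) (fun x => - d x) G) := by
  constructor
  · unfold cdNormE
    refine iSup_le fun x => ?_
    cases x with
    | none =>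
      have hz : d none + -d none + (0 : ℤ) = 0 := by ring
      exact_mod_cast le_of_eq hz
    | some p =>
      have hnot : p ∉ (S ∪ S) \ (D ∪ (S \ D)) := by
        rintro ⟨hs, hd⟩
        rcases hs with h | h <;>
          exact (em (p ∈ D)).elim (fun hD => hd (Or.inl hD))
            (fun hD => hd (Or.inr ⟨h, hD⟩))
      have hz : d (some p) + -d (some p) +
          (if p ∈ (S ∪ S) \ (D ∪ (S \ D)) then (1 : ℤ) else 0) = 0 := by
        rw [if_neg hnot]; ring
      exact_mod_cast le_of_eq hz
  · intro S' D' d' hDS' hc' hF G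
    unfold cdNormE at hF
    rw [iSup_le_iff] at hF
    have keyn : d none + d' none + (0 : ℤ) ≤ 0 := by
      have h2 := hF (none : Option Nat.Primes)
      exact_mod_cast h2
    have keyp : ∀ p : Nat.Primes, d (some p) + d' (some p) +
        (if p ∈ (S ∪ S') \ (D ∪ D') then (1 : ℤ) else 0) ≤ 0 := by
      intro p
      have h2 := hF (some p)
      exact_mod_cast h2
    cases G with
    | rat =>
      simp only [phiOfTriple]
      omega
    | zmod p =>
      have h := keyp p
      simp only [phiOfTriple]
      split_ifs at h <;> omega
    | prufer p =>
      have h := keyp p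
      simp only [phiOfTriple]
      by_cases h1 : p ∈ D' <;> by_cases h2 : p ∈ S <;> by_cases h3 : p ∈ D <;>
        by_cases h4 : p ∈ S' <;>
        first
        | (exact absurd (hDS h3) h2)
        | (simp only [Set.mem_diff, Set.mem_union, h1, h2, h3, h4, not_true_eq_false,
            not_false_eq_true, true_and, false_and, and_true, and_false, true_or, or_true,
            false_or, or_false, not_or, if_true, if_false, ite_true, ite_false] at h ⊢ <;>
            omega)
    | localized p =>
      have h := keyp p
      have hcp : p ∉ S → d (some p) = d none := hc p
      have hcp' : p ∉ S' → d' (some p) = d' none := hc' p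
      simp only [phiOfTriple]
      by_cases h1 : p ∈ D' <;> by_cases h2 : p ∈ S <;> by_cases h3 : p ∈ D <;>
        by_cases h4 : p ∈ S' <;>
        first
        | (exact absurd (hDS h3) h2)
        | (exact absurd (hDS' h1) h4)
        | (simp only [Set.mem_diff, Set.mem_union, h1, h2, h3, h4, not_true_eq_false,
            not_false_eq_true, true_and, false_and, and_true, and_false, true_or, or_true,
            false_or, or_false, not_or, if_true, if_false, ite_true, ite_false,
            le_max_iff, max_le_iff, forall_const] at h hcp hcp' ⊢ <;>
            omega)
end

section
/- Let $R$ be a principal ideal domain (commutative ring with $1$ in which every ideal is principal, and which is a domain). Then for no prime $p$ is the $p$-primary torsion subgroup of the additive group of $R$ both nonzero and $p$-divisible. Equivalently, if $T = \{r \in R : p^k r = 0 \text{ for some } k\}$ is $p$-divisible (i.e., $pT = T$), then $T = 0$. -/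
/-- Let `R` be a principal ideal domain with `1` and `p` a prime.  If the
`p`-primary torsion subgroup `T = {r : R | p^k r = 0 for some k}` of the additive group of
`R` is `p`-divisible (every `t ∈ T` is `p·s` for some `s ∈ T`), then `T = 0`; in
particular `T` is never both nonzero and `p`-divisible (`ℤ_{p^∞} ∉ σ(R)`). -/
theorem pid_pTorsion_not_divisible
    {R : Type} [CommRing R] [IsDomain R] [IsPrincipalIdealRing R]
    (p : ℕ) (hp : p.Prime)
    (hdiv : ∀ t : R, (∃ k : ℕ, p ^ k • t = 0) →
      ∃ s : R, (∃ k : ℕ, p ^ k • s = 0) ∧ p • s = t) :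
    ∀ t : R, (∃ k : ℕ, p ^ k • t = 0) → t = 0 := by
  rintro t ⟨k, hk⟩
  have hk' : (p : R) ^ k * t = 0 := by
    simpa [nsmul_eq_mul] using hk
  rcases mul_eq_zero.mp hk' with h | h
  · -- (p : R) = 0, so use divisibility once
    have hp0 : (p : R) = 0 := (pow_eq_zero_iff'.mp h).1
    obtain ⟨s, _, hs⟩ := hdiv t ⟨k, hk⟩
    rw [← hs, nsmul_eq_mul, hp0, zero_mul]
  · exact h
end
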